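/- arXiv:1808.01909 — 5 statements merged into one kernel-verified Lean document; each statement's English description precedes it below -/
import Mathlib

section
/- Given a Lie algebra (L, [-,-]) over a commutative ring R and a Lie algebra homomorphism α : L → L, the triple (L, α∘[-,-], α) is a hom-Lie algebra; that is, the bracket [x,y]_α := α([x,y]) is skew-symmetric and satisfies the hom-Jacobi identity [α(x),[y,z]_α]_α + [α(y),[z,x]_α]_α + [α(z),[x,y]_α]_α = 0. -/
/-- Given a Lie algebra `L` over a commutative ring `R` and a Lie algebra
homomorphism `α : L → L`, the triple `(L, α∘[-,-], α)` is a hom-Lie algebra: the twisted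
bracket `[x,y]_α := α [x,y]` is skew-symmetric, `R`-bilinear, and satisfies the hom-Jacobi
identity `[α x,[y,z]_α]_α + [α y,[z,x]_α]_α + [α z,[x,y]_α]_α = 0`. -/
theorem homLie_of_lie_and_endomorphism
    (R : Type*) [CommRing R] (L : Type*) [LieRing L] [LieAlgebra R L]
    (α : L →ₗ[R] L) (hα : ∀ x y : L, α ⁅x, y⁆ = ⁅α x, α y⁆) :
    (∀ x y : L, α ⁅x, y⁆ = -α ⁅y, x⁆) ∧
    (∀ (x y z : L) (r : R), α ⁅r • x + y, z⁆ = r • α ⁅x, z⁆ + α ⁅y, z⁆) ∧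
    (∀ x y z : L,
      α ⁅α x, α ⁅y, z⁆⁆ + α ⁅α y, α ⁅z, x⁆⁆ + α ⁅α z, α ⁅x, y⁆⁆ = 0) := by
  refine ⟨fun x y => by rw [← lie_skew, map_neg], fun x y z r => by
    rw [add_lie, smul_lie, map_add, map_smul], fun x y z => ?_⟩
  rw [← hα, ← hα, ← hα, ← map_add, ← map_add,
    ← map_add, ← map_add, lie_jacobi x y z]
  simp
end

section
/- For a regular hom-Lie algebra (L, [-,-], α) (i.e., α is an R-module automorphism preserving the bracket) and any integer s, the pair (ad_s, α) with ad_s(g)(h) := [α^s(g), h] is a representation of (L, [-,-], α) on L. -/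
/-! The twisted adjoint map `x ↦ ad (α^s x)` is a representation because `α^s` is again an
automorphism of the bracket commuting with `α`: both identities then reduce, after substituting
`X = α^s x` and `Y = α^s y`, to multiplicativity of `α` and to the hom-Jacobi identity rewritten
with skew-symmetry. -/

namespace LinearMap

variable {R M : Type*} [CommSemiring R] [AddCommMonoid M] [Module R M]

def bracketAut (b : M →ₗ[R] M →ₗ[R] M) : Subgroup (M ≃ₗ[R] M) where
  carrier := {e | ∀ x y, e (b x y) = b (e x) (e y)}
  mul_mem' {e f} he hf x y := by
    rw [LinearEquiv.mul_apply, LinearEquiv.mul_apply, LinearEquiv.mul_apply, hf, he]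
  one_mem' _ _ := rfl
  inv_mem' {e} he x y := e.injective <| by
    change e (e.symm _) = e (b (e.symm x) (e.symm y))
    rw [he, LinearEquiv.apply_symm_apply, LinearEquiv.apply_symm_apply,
      LinearEquiv.apply_symm_apply]

theorem zpow_apply_bracket {b : M →ₗ[R] M →ₗ[R] M} {α : M ≃ₗ[R] M}
    (hmult : ∀ x y, α (b x y) = b (α x) (α y)) (s : ℤ) (x y : M) :
    (α ^ s) (b x y) = b ((α ^ s) x) ((α ^ s) y) :=
  (bracketAut b).zpow_mem (x := α) hmult s x y

end LinearMap

theorem LinearEquiv.zpow_apply_apply_comm {R M : Type*} [Semiring R] [AddCommMonoid M]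
    [Module R M] (α : M ≃ₗ[R] M) (s : ℤ) (x : M) : (α ^ s) (α x) = α ((α ^ s) x) := by
  rw [← LinearEquiv.mul_apply, ← (Commute.self_zpow α s).eq, LinearEquiv.mul_apply]

theorem LinearMap.hom_leibniz {R L : Type*} [CommSemiring R] [AddCommGroup L] [Module R L]
    {b : L →ₗ[R] L →ₗ[R] L} {α : L → L} (hskew : ∀ x y, b x y = -b y x)
    (hJacobi : ∀ x y z, b (α x) (b y z) + b (α y) (b z x) + b (α z) (b x y) = 0) (x y v : L) :
    b (b x y) (α v) = b (α x) (b y v) - b (α y) (b x v) := by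
  have hJ := hJacobi x y v
  rw [hskew v x, hskew (α v) (b x y), map_neg] at hJ
  rw [← sub_eq_zero, ← neg_eq_zero, ← hJ]
  abel

/-- for a regular (multiplicative, with `α` invertible) hom-Lie algebra
`(L, b, α)` and any integer `s`, the pair `(ad_s, α)` with `ad_s g h = b (α^s g) h`
is a representation of `(L, b, α)` on `L`, i.e. `ad_s (α x) ∘ α = α ∘ ad_s x` and
`ad_s (b x y) ∘ α = ad_s (α x) ∘ ad_s y - ad_s (α y) ∘ ad_s x`. -/
theorem adjoint_rep_of_regular_homLie
    (R : Type*) [CommRing R] (L : Type*) [AddCommGroup L] [Module R L]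
    (b : L →ₗ[R] L →ₗ[R] L) (α : L ≃ₗ[R] L)
    (hskew : ∀ x y : L, b x y = -b y x)
    (hmult : ∀ x y : L, α (b x y) = b (α x) (α y))
    (hJacobi : ∀ x y z : L,
      b (α x) (b y z) + b (α y) (b z x) + b (α z) (b x y) = 0)
    (s : ℤ) :
    (∀ x v : L, b ((α ^ s) (α x)) (α v) = α (b ((α ^ s) x) v)) ∧
    (∀ x y v : L, b ((α ^ s) (b x y)) (α v)
        = b ((α ^ s) (α x)) (b ((α ^ s) y) v) - b ((α ^ s) (α y)) (b ((α ^ s) x) v)) := by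
  refine ⟨fun x v => ?_, fun x y v => ?_⟩
  · rw [α.zpow_apply_apply_comm, hmult]
  · rw [LinearMap.zpow_apply_bracket hmult, α.zpow_apply_apply_comm, α.zpow_apply_apply_comm]
    exact LinearMap.hom_leibniz hskew hJacobi _ _ _
end

section
/- Let L be a Lie-Rinehart algebra over A with anchor ρ, and (φ, α) : (A, L) → (A, L) an endomorphism in the category of Lie-Rinehart algebras. Then (A, L, [-,-]_α, φ, α, ρ_φ) with [x,y]_α := α([x,y]) and ρ_φ(x)(a) := φ(ρ(x)(a)) is a hom-Lie-Rinehart algebra over (A, φ). -/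
/-- The axioms of a hom-Lie-Rinehart algebra over `(A,φ)`, for a bracket `b`, twisting map
`α` and anchor `ρ` defined on (a sub-carrier `S` of) an `A`-module `L`. -/
structure IsHomLieRinehartOn (R : Type*) [CommRing R] (A : Type*) [CommRing A] [Algebra R A]
    (L : Type*) [AddCommGroup L] [Module R L] [Module A L] [IsScalarTower R A L]
    (φ : A →ₐ[R] A) (b : L → L → L) (α : L → L) (ρ : L → A → A) (S : Set L) : Prop where
  add_mem : ∀ x ∈ S, ∀ y ∈ S, x + y ∈ S
  smul_mem : ∀ (a : A), ∀ x ∈ S, a • x ∈ S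
  bracket_mem : ∀ x ∈ S, ∀ y ∈ S, b x y ∈ S
  alpha_mem : ∀ x ∈ S, α x ∈ S
  bracket_add_left : ∀ x ∈ S, ∀ y ∈ S, ∀ z ∈ S, b (x + y) z = b x z + b y z
  bracket_smul_left : ∀ (r : R), ∀ x ∈ S, ∀ y ∈ S, b (r • x) y = r • b x y
  skew : ∀ x ∈ S, ∀ y ∈ S, b x y = -b y x
  alpha_add : ∀ x ∈ S, ∀ y ∈ S, α (x + y) = α x + α y
  alpha_smulR : ∀ (r : R), ∀ x ∈ S, α (r • x) = r • α x
  alpha_smulA : ∀ (a : A), ∀ x ∈ S, α (a • x) = φ a • α x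
  alpha_bracket : ∀ x ∈ S, ∀ y ∈ S, α (b x y) = b (α x) (α y)
  hom_jacobi : ∀ x ∈ S, ∀ y ∈ S, ∀ z ∈ S,
    b (α x) (b y z) + b (α y) (b z x) + b (α z) (b x y) = 0
  rho_linearA : ∀ x ∈ S, IsLinearMap R (ρ x)
  rho_add : ∀ x ∈ S, ∀ y ∈ S, ρ (x + y) = ρ x + ρ y
  rho_smulR : ∀ (r : R), ∀ x ∈ S, ∀ (a : A), ρ (r • x) a = r • ρ x a
  rho_smulA : ∀ (a : A), ∀ x ∈ S, ∀ (c : A), ρ (a • x) c = φ a * ρ x c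
  rho_der : ∀ x ∈ S, ∀ (a c : A), ρ x (a * c) = φ a * ρ x c + φ c * ρ x a
  rep_beta : ∀ x ∈ S, ∀ (a : A), ρ (α x) (φ a) = φ (ρ x a)
  rep_bracket : ∀ x ∈ S, ∀ y ∈ S, ∀ (a : A),
    ρ (b x y) (φ a) = ρ (α x) (ρ y a) - ρ (α y) (ρ x a)
  hom_leibniz : ∀ x ∈ S, ∀ y ∈ S, ∀ (a : A),
    b x (a • y) = φ a • b x y + ρ x a • α y

/-- The twisted Jacobi sum is `α` applied to the Jacobi sum of `α x, α y, α z`. -/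
theorem hom_jacobi_comp_bracket {L : Type*} [AddCommGroup L] {b : L → L → L} (α : L →+ L)
    (hjac : ∀ x y z, b x (b y z) + b y (b z x) + b z (b x y) = 0)
    (hbr : ∀ x y, α (b x y) = b (α x) (α y)) (x y z : L) :
    α (b (α x) (α (b y z))) + α (b (α y) (α (b z x))) + α (b (α z) (α (b x y))) = 0 := by
  rw [hbr y z, hbr z x, hbr x y, ← map_add, ← map_add, hjac, map_zero]

theorem leibniz_comp_bracket {A L : Type*} [CommRing A] [AddCommGroup L] [Module A L]
    {b : L → L → L} {ρ : L → A → A} (φ : A → A) (α : L →+ L) (hsmulA : ∀ (a : A) (x : L), α (a • x) = φ a • α x)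
    (hleib : ∀ x y (a : A), b x (a • y) = a • b x y + ρ x a • y) (x y : L) (a : A) :
    α (b x (a • y)) = φ a • α (b x y) + φ (ρ x a) • α y := by
  rw [hleib, map_add, hsmulA, hsmulA]

theorem rep_bracket_comp_anchor {A L : Type*} [AddCommGroup A] {F : Type*} [FunLike F A A]
    [AddMonoidHomClass F A A] {b : L → L → L} {ρ : L → A → A} (φ : F) (α : L → L)
    (hrep : ∀ x y a, ρ (b x y) a = ρ x (ρ y a) - ρ y (ρ x a))
    (hanchor : ∀ x a, ρ (α x) (φ a) = φ (ρ x a)) (x y : L) (a : A) :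
    φ (ρ (α (b x y)) (φ a)) = φ (ρ (α x) (φ (ρ y a))) - φ (ρ (α y) (φ (ρ x a))) := by
  simp only [hanchor, hrep, map_sub]

/-- a Lie-Rinehart algebra `L` over `A` (the case `φ = id`, `α = id` of the
hom-Lie-Rinehart axioms) together with an endomorphism `(φ, α)` in the category of
Lie-Rinehart algebras yields, by composition, the hom-Lie-Rinehart algebra
`(A, L, α∘[-,-], φ, α, φ∘ρ)` over `(A, φ)`. -/
theorem homLieRinehart_by_composition
    (R : Type*) [CommRing R] (A : Type*) [CommRing A] [Algebra R A]
    (L : Type*) [AddCommGroup L] [Module R L] [Module A L] [IsScalarTower R A L]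
    (b : L → L → L) (ρ : L → A → A)
    (hLR : IsHomLieRinehartOn R A L (AlgHom.id R A) b id ρ Set.univ)
    (φ : A →ₐ[R] A) (α : L → L)
    (hadd : ∀ x y : L, α (x + y) = α x + α y)
    (hsmulR : ∀ (r : R) (x : L), α (r • x) = r • α x)
    (hsmulA : ∀ (a : A) (x : L), α (a • x) = φ a • α x)
    (hbr : ∀ x y : L, α (b x y) = b (α x) (α y))
    (hanchor : ∀ (x : L) (a : A), ρ (α x) (φ a) = φ (ρ x a)) :
    IsHomLieRinehartOn R A L φ (fun x y => α (b x y)) α (fun x a => φ (ρ x a))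
      Set.univ := by
  let αₐ : L →+ L := AddMonoidHom.mk' α hadd
  refine
    { add_mem := fun _ _ _ _ => trivial
      smul_mem := fun _ _ _ => trivial
      bracket_mem := fun _ _ _ _ => trivial
      alpha_mem := fun _ _ => trivial
      bracket_add_left := fun x _ y _ z _ => by
        rw [hLR.bracket_add_left x trivial y trivial z trivial, hadd]
      bracket_smul_left := fun r x _ y _ => by
        rw [hLR.bracket_smul_left r x trivial y trivial, hsmulR]
      skew := fun x _ y _ => by rw [hLR.skew x trivial y trivial]; exact map_neg αₐ _
      alpha_add := fun x _ y _ => hadd x y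
      alpha_smulR := fun r x _ => hsmulR r x
      alpha_smulA := fun a x _ => hsmulA a x
      alpha_bracket := fun x _ y _ => by rw [hbr, hbr]
      hom_jacobi := fun x _ y _ z _ => hom_jacobi_comp_bracket αₐ
        (fun x y z => hLR.hom_jacobi x trivial y trivial z trivial) hbr x y z
      rho_linearA := fun x _ => (φ.toLinearMap ∘ₗ (hLR.rho_linearA x trivial).mk').isLinear
      rho_add := fun x _ y _ => funext fun a => by
        rw [Pi.add_apply, hLR.rho_add x trivial y trivial, Pi.add_apply, map_add]
      rho_smulR := fun r x _ a => by rw [hLR.rho_smulR r x trivial a, map_smul]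
      rho_smulA := fun a x _ c => by simp [hLR.rho_smulA a x trivial c]
      rho_der := fun x _ a c => by simp [hLR.rho_der x trivial a c]
      rep_beta := fun x _ a => by rw [hanchor]
      rep_bracket := fun x _ y _ a => rep_bracket_comp_anchor φ α
        (fun x y a => hLR.rep_bracket x trivial y trivial a) hanchor x y a
      hom_leibniz := fun x _ y _ a => leibniz_comp_bracket φ αₐ hsmulA
        (fun x y a => hLR.hom_leibniz x trivial y trivial a) x y a }
end

section
/- If 𝔪_t = Σ_{i≥0} t^i m_i is a formal one-parameter deformation of a hom-Lie-Rinehart structure 𝔪 (so m_0 = 𝔪 and [[𝔪_t, 𝔪_t]] = 0), then the first-order term m_1 (the infinitesimal) is a 2-cocycle: δ(m_1) = [𝔪, m_1] = 0. More generally, if m_i = 0 for 1 ≤ i ≤ n−1 and m_n ≠ 0, then m_n is a 2-cocycle. -/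
open scoped BigOperators

section Framework

variable (R : Type*) [CommRing R] (A : Type*) [CommRing A] [Algebra R A]
variable (M : Type*) [AddCommGroup M] [Module R M] [Module A M] [IsScalarTower R A M]

/-- A `(φ,β)`-multiderivation of degree `n` of the `A`-module `M`, with symbol `σ`. -/
structure IsMultiDer (φ : A →ₐ[R] A) (β : M → M) (n : ℕ)
    (D : (Fin (n + 1) → M) → M) (σ : (Fin n → M) → A → A) : Prop where
  D_add : ∀ (x : Fin (n + 1) → M) (i : Fin (n + 1)) (u v : M),
    D (Function.update x i (u + v)) = D (Function.update x i u) + D (Function.update x i v)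
  D_smul : ∀ (x : Fin (n + 1) → M) (i : Fin (n + 1)) (r : R) (u : M),
    D (Function.update x i (r • u)) = r • D (Function.update x i u)
  D_alt : ∀ (x : Fin (n + 1) → M) (i j : Fin (n + 1)), i ≠ j → x i = x j → D x = 0
  σ_add : ∀ (x : Fin n → M) (i : Fin n) (u v : M),
    σ (Function.update x i (u + v)) = σ (Function.update x i u) + σ (Function.update x i v)
  σ_smul : ∀ (x : Fin n → M) (i : Fin n) (r : R) (u : M),
    σ (Function.update x i (r • u)) = r • σ (Function.update x i u)
  σ_alt : ∀ (x : Fin n → M) (i j : Fin n), i ≠ j → x i = x j → σ x = 0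
  σ_linear : ∀ x : Fin n → M, IsLinearMap R (σ x)
  σ_der : ∀ (x : Fin n → M) (a b : A),
    σ x (a * b) = (⇑φ)^[n] a * σ x b + (⇑φ)^[n] b * σ x a
  D_beta : ∀ x : Fin (n + 1) → M, D (fun i => β (x i)) = β (D x)
  σ_beta : ∀ (x : Fin n → M) (a : A), σ (fun i => β (x i)) (φ a) = φ (σ x a)
  σ_A : ∀ (x : Fin n → M) (i : Fin n) (a : A),
    σ (Function.update x i (a • x i)) = fun b => (⇑φ)^[n] a * σ x b
  D_leibniz : ∀ (x : Fin (n + 1) → M) (a : A),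
    D (Function.update x (Fin.last n) (a • x (Fin.last n)))
      = (⇑φ)^[n] a • D x + σ (fun i : Fin n => x i.castSucc) a • (β^[n] (x (Fin.last n)))

variable {M}

/-- `(q+1,p)`-shuffles: permutations strictly increasing on the first `k` positions
and on the remaining ones. -/
def IsShuffle (k : ℕ) {n : ℕ} (τ : Equiv.Perm (Fin n)) : Prop :=
  (∀ i j : Fin n, i < j → (j : ℕ) < k → τ i < τ j) ∧
  (∀ i j : Fin n, i < j → k ≤ (i : ℕ) → τ i < τ j)

instance (k n : ℕ) : DecidablePred (fun τ : Equiv.Perm (Fin n) => IsShuffle k τ) := fun τ =>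
  inferInstanceAs (Decidable (_ ∧ _))

/-- Shuffle composition `D₁ ∘ D₂` of multiderivations of degrees `p` and `q`. -/
def compFun (β : M → M) (p q : ℕ) (D1 : (Fin (p + 1) → M) → M) (D2 : (Fin (q + 1) → M) → M)
    (x : Fin (p + q + 1) → M) : M :=
  ∑ τ ∈ Finset.univ.filter (fun τ : Equiv.Perm (Fin (p + q + 1)) => IsShuffle (q + 1) τ),
    (Equiv.Perm.sign τ : ℤ) •
      D1 (Fin.cons (D2 (fun i : Fin (q + 1) => x (τ (Fin.castLE (by omega) i))))
        (fun j : Fin p => β^[q] (x (τ (Fin.cast (by omega) (Fin.natAdd (q + 1) j))))))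

/-- The graded Lie bracket `[D₁,D₂] = (-1)^{pq} D₁∘D₂ - D₂∘D₁`. -/
def bracketFun (β : M → M) (p q : ℕ) (D1 : (Fin (p + 1) → M) → M)
    (D2 : (Fin (q + 1) → M) → M) (x : Fin (p + q + 1) → M) : M :=
  ((-1 : ℤ)) ^ (p * q) • compFun β p q D1 D2 x -
    compFun β q p D2 D1 (fun i => x (Fin.cast (by omega) i))

variable {A}

/-- The operation `σ₁ ⊙ D₂` on symbols. -/
def odotFun (φ : A → A) (β : M → M) :
    (p : ℕ) → (q : ℕ) → ((Fin p → M) → A → A) → ((Fin (q + 1) → M) → M) →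
      (Fin (p + q) → M) → A → A
  | 0, _, _, _, _, _ => 0
  | (p' + 1), q, σ1, D2, x, a =>
    ∑ τ ∈ Finset.univ.filter (fun τ : Equiv.Perm (Fin (p' + 1 + q)) => IsShuffle (q + 1) τ),
      (Equiv.Perm.sign τ : ℤ) •
        σ1 (Fin.cons (D2 (fun i : Fin (q + 1) => x (τ (Fin.castLE (by omega) i))))
            (fun j : Fin p' => β^[q] (x (τ (Fin.cast (by omega) (Fin.natAdd (q + 1) j))))))
          (φ^[q] a)

/-- The bracket `{σ₁, σ₂}` of symbols. -/
def symBrFun (β : M → M) (p q : ℕ) (σ1 : (Fin p → M) → A → A) (σ2 : (Fin q → M) → A → A)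
    (x : Fin (p + q) → M) (a : A) : A :=
  ∑ τ ∈ Finset.univ.filter (fun τ : Equiv.Perm (Fin (p + q)) => IsShuffle p τ),
    (Equiv.Perm.sign τ : ℤ) •
      (σ1 (fun i : Fin p => β^[q] (x (τ (Fin.castLE (by omega) i))))
          (σ2 (fun j : Fin q => x (τ (Fin.cast (by omega) (Fin.natAdd p j)))) a)
        - σ2 (fun j : Fin q => β^[p] (x (τ (Fin.cast (by omega) (Fin.natAdd p j)))))
          (σ1 (fun i : Fin p => x (τ (Fin.castLE (by omega) i))) a))

end Framework

/- In degree 1 the shuffle composition `D₁ ∘ D₂` has three terms, and for alternating `D₁, D₂`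
it is minus the cyclic sum `D₁(α x, D₂(y, z)) + ⋯`. Hence `[𝔪, mₙ] = -(𝔪 ∘ mₙ) - mₙ ∘ 𝔪` is the
cyclic sum of `𝔪(α x, mₙ(y, z)) + mₙ(α x, 𝔪(y, z))`, which is the whole `tⁿ`-coefficient of the
hom-Jacobi identity of `𝔪_t` once `m₁ = ⋯ = mₙ₋₁ = 0`. -/

def cyclicComp {M : Type*} [Add M] (β : M → M) (D₁ D₂ : (Fin 2 → M) → M) (x y z : M) : M :=
  D₁ ![β x, D₂ ![y, z]] + D₁ ![β y, D₂ ![z, x]] + D₁ ![β z, D₂ ![x, y]]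

lemma filter_isShuffle_two_fin_three :
    Finset.univ.filter (fun τ : Equiv.Perm (Fin 3) => IsShuffle 2 τ)
      = {Equiv.refl (Fin 3), Equiv.swap 1 2, finRotate 3} := by
  decide

lemma compFun_one_one {M : Type*} [AddCommGroup M] (β : M → M) (D₁ D₂ : (Fin 2 → M) → M)
    (x : Fin 3 → M) :
    compFun β 1 1 D₁ D₂ x =
      D₁ ![D₂ ![x 0, x 1], β (x 2)] - D₁ ![D₂ ![x 0, x 2], β (x 1)]
        + D₁ ![D₂ ![x 1, x 2], β (x 0)] := by
  rw [compFun, filter_isShuffle_two_fin_three, Finset.sum_insert (by decide),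
    Finset.sum_insert (by decide), Finset.sum_singleton]
  have sign_finRotate : Equiv.Perm.sign (finRotate 3) = 1 := by decide
  simp only [Equiv.Perm.sign_refl, Equiv.Perm.sign_swap (by decide : (1 : Fin 3) ≠ 2),
    sign_finRotate, Function.iterate_one]
  have cons_eq (a : M) (f : Fin 1 → M) : Fin.cons a f = ![a, f 0] := by
    funext i; fin_cases i <;> rfl
  have args_refl : (fun i : Fin 2 => x (Equiv.refl (Fin 3) (Fin.castLE (by omega) i)))
      = ![x 0, x 1] := by
    funext i; fin_cases i <;> rfl
  have args_swap : (fun i : Fin 2 => x (Equiv.swap (1 : Fin 3) 2 (Fin.castLE (by omega) i)))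
      = ![x 0, x 2] := by
    funext i; fin_cases i <;> rfl
  have args_rotate : (fun i : Fin 2 => x (finRotate 3 (Fin.castLE (by omega) i)))
      = ![x 1, x 2] := by
    funext i; fin_cases i <;> rfl
  simp only [cons_eq, args_refl, args_swap, args_rotate]
  push_cast
  rw [one_smul, one_smul, neg_one_smul, sub_eq_add_neg]
  exact (add_assoc _ _ _).symm

section Alternating

variable {R : Type*} [CommRing R] {M N : Type*} [AddCommGroup M] [Module R M]
  [AddCommGroup N] [Module R N]

lemma AlternatingMap.map_vecCons_swap (f : M [⋀^Fin 2]→ₗ[R] N) (u v : M) :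
    f ![u, v] = -f ![v, u] := by
  rw [← f.map_swap ![v, u] (by decide : (0 : Fin 2) ≠ 1)]
  congr 1
  funext i; fin_cases i <;> rfl

lemma AlternatingMap.map_vecCons_neg (f : M [⋀^Fin 2]→ₗ[R] N) (u v : M) :
    f ![u, -v] = -f ![u, v] := by
  have update_eq (w : M) : Function.update ![u, v] 1 w = ![u, w] := by
    funext i; fin_cases i <;> rfl
  simpa only [update_eq] using f.map_update_neg ![u, v] 1 v

lemma AlternatingMap.compFun_one_one (β : M → M) (f₁ f₂ : M [⋀^Fin 2]→ₗ[R] M) (x : Fin 3 → M) :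
    compFun β 1 1 f₁ f₂ x = -cyclicComp β f₁ f₂ (x 0) (x 1) (x 2) := by
  rw [_root_.compFun_one_one, cyclicComp, f₁.map_vecCons_swap (f₂ ![x 0, x 1]),
    f₁.map_vecCons_swap (f₂ ![x 0, x 2]), f₁.map_vecCons_swap (f₂ ![x 1, x 2]),
    f₂.map_vecCons_swap (x 0) (x 2), f₁.map_vecCons_neg]
  abel

lemma AlternatingMap.bracketFun_one_one (β : M → M) (f₁ f₂ : M [⋀^Fin 2]→ₗ[R] M)
    (x : Fin 3 → M) :
    bracketFun β 1 1 f₁ f₂ x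
      = cyclicComp β f₁ f₂ (x 0) (x 1) (x 2) + cyclicComp β f₂ f₁ (x 0) (x 1) (x 2) := by
  rw [bracketFun, f₁.compFun_one_one, f₂.compFun_one_one]
  simp only [Fin.cast_eq_self, mul_one, pow_one, neg_one_smul, neg_neg, sub_neg_eq_add]

end Alternating

namespace IsMultiDer

variable {R : Type*} [CommRing R] {A : Type*} [CommRing A] [Algebra R A]
variable {M : Type*} [AddCommGroup M] [Module R M] [Module A M]
variable {φ : A →ₐ[R] A} {β : M → M} {n : ℕ} {D : (Fin (n + 1) → M) → M}
  {σ : (Fin n → M) → A → A}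

def toAlternatingMap (h : IsMultiDer R A M φ β n D σ) : M [⋀^Fin (n + 1)]→ₗ[R] M where
  toFun := D
  map_update_add' x i u v := by convert h.D_add x i u v
  map_update_smul' x i r u := by convert h.D_smul x i r u
  map_eq_zero_of_eq' x i j hx hij := h.D_alt x i j hij hx

lemma bracketFun_one_one {D₁ D₂ : (Fin 2 → M) → M} {σ₁ σ₂ : (Fin 1 → M) → A → A}
    (h₁ : IsMultiDer R A M φ β 1 D₁ σ₁) (γ : M → M) (h₂ : IsMultiDer R A M φ β 1 D₂ σ₂)
    (x : Fin 3 → M) :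
    bracketFun γ 1 1 D₁ D₂ x
      = cyclicComp γ D₁ D₂ (x 0) (x 1) (x 2) + cyclicComp γ D₂ D₁ (x 0) (x 1) (x 2) :=
  h₁.toAlternatingMap.bracketFun_one_one γ h₂.toAlternatingMap x

end IsMultiDer

lemma cyclicComp_zero_left {M : Type*} [AddMonoid M] (β : M → M) (D : (Fin 2 → M) → M)
    (x y z : M) : cyclicComp β 0 D x y z = 0 := by
  simp [cyclicComp]

lemma sum_range_cyclicComp_eq_of_eq_zero {M : Type*} [AddCommMonoid M] (β : M → M)
    (m : ℕ → (Fin 2 → M) → M) {n : ℕ} (hn : 1 ≤ n) (hm : ∀ i, 1 ≤ i → i < n → m i = 0)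
    (x y z : M) :
    ∑ i ∈ Finset.range (n + 1), cyclicComp β (m i) (m (n - i)) x y z
      = cyclicComp β (m 0) (m n) x y z + cyclicComp β (m n) (m 0) x y z := by
  obtain ⟨k, rfl⟩ : ∃ k, n = k + 1 := ⟨n - 1, by omega⟩
  have middle_eq_zero :
      ∑ i ∈ Finset.range k, cyclicComp β (m (i + 1)) (m (k + 1 - (i + 1))) x y z = 0 :=
    Finset.sum_eq_zero fun i hi => by
      rw [hm (i + 1) (by omega) (by simp at hi; omega), cyclicComp_zero_left]
  rw [Finset.sum_range_succ, Finset.sum_range_succ', middle_eq_zero, zero_add, Nat.sub_zero,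
    Nat.sub_self]

theorem infinitesimal_is_two_cocycle_general
    (R : Type*) [CommRing R] (A : Type*) [CommRing A] [Algebra R A]
    (L : Type*) [AddCommGroup L] [Module R L] [Module A L]
    (φ : A →ₐ[R] A) (α : L → L)
    (m : ℕ → (Fin 2 → L) → L) (σs : ℕ → (Fin 1 → L) → A → A)
    (hmd : ∀ i, IsMultiDer R A L φ α 1 (m i) (σs i))
    (hdef : ∀ (n : ℕ) (x y z : L),
      ∑ i ∈ Finset.range (n + 1),
        (m i ![α x, m (n - i) ![y, z]] + m i ![α y, m (n - i) ![z, x]]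
          + m i ![α z, m (n - i) ![x, y]]) = 0) :
    ∀ n : ℕ, 1 ≤ n → (∀ i, 1 ≤ i → i < n → m i = 0) →
      ∀ x : Fin 3 → L, bracketFun α 1 1 (m 0) (m n) x = 0 := by
  intro n hn hm x
  rw [(hmd 0).bracketFun_one_one α (hmd n) x, ← sum_range_cyclicComp_eq_of_eq_zero α m hn hm]
  exact hdef n (x 0) (x 1) (x 2)

/-- if `𝔪_t = Σ tⁱ mᵢ` is a formal one-parameter deformation of the
hom-Lie-Rinehart structure `𝔪 = m₀` (expressed by the coefficientwise hom-Jacobi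
equations), then the infinitesimal `m₁` is a 2-cocycle, `δ(m₁) = [𝔪, m₁] = 0`; more
generally, if `mᵢ = 0` for `1 ≤ i ≤ n-1` then the `n`-infinitesimal `mₙ` is a 2-cocycle. -/
theorem infinitesimal_is_two_cocycle
    (R : Type*) [CommRing R] (A : Type*) [CommRing A] [Algebra R A]
    (L : Type*) [AddCommGroup L] [Module R L] [Module A L] [IsScalarTower R A L]
    (φ : A →ₐ[R] A) (α : L → L)
    (m : ℕ → (Fin 2 → L) → L) (σs : ℕ → (Fin 1 → L) → A → A)
    (hmd : ∀ i, IsMultiDer R A L φ α 1 (m i) (σs i))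
    (hdef : ∀ (n : ℕ) (x y z : L),
      ∑ i ∈ Finset.range (n + 1),
        (m i ![α x, m (n - i) ![y, z]] + m i ![α y, m (n - i) ![z, x]]
          + m i ![α z, m (n - i) ![x, y]]) = 0) :
    ∀ n : ℕ, 1 ≤ n → (∀ i, 1 ≤ i → i < n → m i = 0) →
      ∀ x : Fin 3 → L, bracketFun α 1 1 (m 0) (m n) x = 0 :=
  infinitesimal_is_two_cocycle_general R A L φ α m σs hmd hdef
end

section
/- Let A be a commutative R-algebra, L an A-module admitting a Koszul connection ∇ : Der(A) → Hom_R(L, L). Then for each n ≥ 0, the map D ↦ (F_D, σ_D), where F_D(x_0,…,x_n) = D(x_0,…,x_n) + (−1)^n Σ_{i=0}^n (−1)^{i+1} ∇_{σ_D(x_0,…,x̂_i,…,x_n)}(x_i), gives an isomorphism of A-modules Der^n(L) ≅ Hom_A(Λ^{n+1}_A L, L) ⊕ Hom_A(Λ^n_A L, Der(A)); in particular there is a short exact sequence 0 → Hom_A(Λ^{n+1}_A L, L) → Der^n(L) → Hom_A(Λ^n_A L, Der(A)) → 0. -/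
open scoped BigOperators


section MDhelp
variable {L : Type*} [AddCommGroup L]

/-- Generic: additive-in-each-slot maps vanishing on adjacent-equal tuples are
antisymmetric under adjacent swaps. -/
theorem MD.adj_swap {M : Type*} [AddCommGroup M] {m : ℕ} (G : (Fin m → L) → M)
    (Hadd : ∀ (x : Fin m → L) (i : Fin m) (u v : L),
      G (Function.update x i (u + v)) = G (Function.update x i u) + G (Function.update x i v))
    (Hadj : ∀ (x : Fin m → L) (i j : Fin m), (j : ℕ) = (i : ℕ) + 1 → x i = x j → G x = 0)
    (x : Fin m → L) (i j : Fin m) (hj : (j : ℕ) = (i : ℕ) + 1) (u v : L) :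
    G (Function.update (Function.update x i u) j v)
      = - G (Function.update (Function.update x i v) j u) := by
  have hij : i ≠ j := by intro h; rw [h] at hj; omega
  have h0 : G (Function.update (Function.update x i (u + v)) j (u + v)) = 0 := by
    apply Hadj _ i j hj
    rw [Function.update_of_ne hij, Function.update_self, Function.update_self]
  rw [Hadd (Function.update x i (u + v)) j u v] at h0
  rw [Function.update_comm hij (u+v) u x, Function.update_comm hij (u+v) v x] at h0
  rw [Hadd (Function.update x j u) i u v, Hadd (Function.update x j v) i u v] at h0
  have z1 : G (Function.update (Function.update x j u) i u) = 0 := by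
    apply Hadj _ i j hj
    rw [Function.update_self, Function.update_of_ne hij.symm, Function.update_self]
  have z2 : G (Function.update (Function.update x j v) i v) = 0 := by
    apply Hadj _ i j hj
    rw [Function.update_self, Function.update_of_ne hij.symm, Function.update_self]
  rw [z1, z2, Function.update_comm hij.symm, Function.update_comm hij.symm] at h0
  simp only [zero_add, add_zero] at h0
  exact eq_neg_of_add_eq_zero_right h0

theorem MD.alternating {M : Type*} [AddCommGroup M] {m : ℕ} (G : (Fin m → L) → M)
    (Hadd : ∀ (x : Fin m → L) (i : Fin m) (u v : L),
      G (Function.update x i (u + v)) = G (Function.update x i u) + G (Function.update x i v))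
    (Hadj : ∀ (x : Fin m → L) (i j : Fin m), (j : ℕ) = (i : ℕ) + 1 → x i = x j → G x = 0) :
    ∀ (x : Fin m → L) (i j : Fin m), i ≠ j → x i = x j → G x = 0 := by
  have aux : ∀ (d : ℕ) (x : Fin m → L) (i j : Fin m),
      (j : ℕ) = (i : ℕ) + d + 1 → x i = x j → G x = 0 := by
    intro d
    induction d with
    | zero => intro x i j hj hx; exact Hadj x i j (by omega) hx
    | succ d ih =>
      intro x i j hj hx
      have hjm : (j : ℕ) < m := j.isLt
      set j₁ : Fin m := ⟨(i : ℕ) + d + 1, by omega⟩ with hj₁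
      have hjj₁ : (j : ℕ) = (j₁ : ℕ) + 1 := by simp [hj₁]; omega
      have hx' : G x = - G (Function.update (Function.update x j₁ (x j)) j (x j₁)) := by
        have := MD.adj_swap G Hadd Hadj x j₁ j hjj₁ (x j₁) (x j)
        rwa [Function.update_eq_self, Function.update_eq_self] at this
      have hij₁ : i ≠ j₁ := by
        intro h; have := congrArg Fin.val h; simp [hj₁] at this; omega
      have hij : i ≠ j := by intro h; rw [h] at hj; omega
      have hj₁j : j₁ ≠ j := by intro h; rw [h] at hjj₁; omega
      rw [hx']
      have : G (Function.update (Function.update x j₁ (x j)) j (x j₁)) = 0 := by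
        apply ih _ i j₁ (by simp [hj₁])
        rw [Function.update_of_ne hij, Function.update_of_ne hij₁,
          Function.update_of_ne hj₁j, Function.update_self]
        exact hx
      rw [this, neg_zero]
  intro x i j hij hx
  rcases lt_trichotomy (i : ℕ) (j : ℕ) with h | h | h
  · exact aux ((j : ℕ) - (i : ℕ) - 1) x i j (by omega) hx
  · exact absurd (Fin.ext h) hij
  · exact aux ((i : ℕ) - (j : ℕ) - 1) x j i (by omega) hx.symm

end MDhelp

section MDmain
variable {R : Type*} [CommRing R] {A : Type*} [CommRing A] [Algebra R A]
  {L : Type*} [AddCommGroup L] [Module R L] [Module A L] [IsScalarTower R A L] {n : ℕ}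

/-- the correction term. -/
def MD.C (conn : Derivation R A A →ₗ[A] (L →ₗ[R] L))
    (σ : (Fin n → L) → Derivation R A A) (x : Fin (n + 1) → L) : L :=
  ∑ i : Fin (n + 1), ((-1 : ℤ)) ^ (n + (i : ℕ) + 1) •
    (conn (σ (fun j : Fin n => x (i.succAbove j))) (x i))

theorem MD.update_comp_self (x : Fin (n + 1) → L) (i : Fin (n + 1)) (u : L) :
    (fun j : Fin n => Function.update x i u (i.succAbove j))
      = fun j : Fin n => x (i.succAbove j) :=
  funext fun j => Function.update_of_ne (Fin.succAbove_ne i j) u x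

theorem MD.update_comp_ne {k i : Fin (n + 1)} (h : i ≠ k) (x : Fin (n + 1) → L) :
    ∃ i' : Fin n, ∀ u : L,
      (fun j : Fin n => Function.update x i u (k.succAbove j))
        = Function.update (fun j : Fin n => x (k.succAbove j)) i' u := by
  obtain ⟨i', hi'⟩ := Fin.exists_succAbove_eq h
  refine ⟨i', fun u => funext fun j => ?_⟩
  by_cases hj : j = i'
  · subst hj
    rw [hi', Function.update_self, Function.update_self]
  · rw [Function.update_of_ne hj, Function.update_of_ne (fun hh => hj (k.succAbove_right_injective (hi' ▸ hh)))]

theorem MD.C_update_add (conn : Derivation R A A →ₗ[A] (L →ₗ[R] L))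
    (σ : (Fin n → L) → Derivation R A A)
    (hσadd : ∀ (y : Fin n → L) (i : Fin n) (u v : L),
      σ (Function.update y i (u + v)) = σ (Function.update y i u) + σ (Function.update y i v))
    (x : Fin (n + 1) → L) (i : Fin (n + 1)) (u v : L) :
    MD.C conn σ (Function.update x i (u + v))
      = MD.C conn σ (Function.update x i u) + MD.C conn σ (Function.update x i v) := by
  unfold MD.C
  rw [← Finset.sum_add_distrib]
  apply Finset.sum_congr rfl
  intro k _
  by_cases hk : i = k
  · subst hk
    rw [MD.update_comp_self, MD.update_comp_self, MD.update_comp_self,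
      Function.update_self, Function.update_self, Function.update_self,
      map_add, smul_add]
  · obtain ⟨i', hi'⟩ := MD.update_comp_ne hk x
    rw [hi', hi', hi', hσadd, map_add, LinearMap.add_apply,
      Function.update_of_ne (Ne.symm hk), Function.update_of_ne (Ne.symm hk),
      Function.update_of_ne (Ne.symm hk), smul_add]

theorem MD.C_update_smulR (conn : Derivation R A A →ₗ[A] (L →ₗ[R] L))
    (σ : (Fin n → L) → Derivation R A A)
    (hσA : ∀ (y : Fin n → L) (i : Fin n) (a : A) (u : L),
      σ (Function.update y i (a • u)) = a • σ (Function.update y i u))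
    (x : Fin (n + 1) → L) (i : Fin (n + 1)) (r : R) (u : L) :
    MD.C conn σ (Function.update x i (r • u))
      = r • MD.C conn σ (Function.update x i u) := by
  unfold MD.C
  rw [Finset.smul_sum]
  apply Finset.sum_congr rfl
  intro k _
  by_cases hk : i = k
  · subst hk
    rw [MD.update_comp_self, MD.update_comp_self, Function.update_self, Function.update_self,
      map_smul, smul_comm]
  · obtain ⟨i', hi'⟩ := MD.update_comp_ne hk x
    have hr : (r • u) = (algebraMap R A r) • u := (algebraMap_smul A r u).symm
    rw [hi', hi', hr, hσA, map_smul, LinearMap.smul_apply,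
      Function.update_of_ne (Ne.symm hk), Function.update_of_ne (Ne.symm hk),
      algebraMap_smul, smul_comm]

theorem MD.C_update_smulA (conn : Derivation R A A →ₗ[A] (L →ₗ[R] L))
    (hconn : ∀ (X : Derivation R A A) (a : A) (x : L),
      conn X (a • x) = X a • x + a • conn X x)
    (σ : (Fin n → L) → Derivation R A A)
    (hσA : ∀ (y : Fin n → L) (i : Fin n) (a : A) (u : L),
      σ (Function.update y i (a • u)) = a • σ (Function.update y i u))
    (x : Fin (n + 1) → L) (i : Fin (n + 1)) (a : A) (u : L) :
    MD.C conn σ (Function.update x i (a • u))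
      = a • MD.C conn σ (Function.update x i u)
        + ((-1 : ℤ)) ^ (n + (i : ℕ) + 1) • ((σ fun j : Fin n => x (i.succAbove j)) a • u) := by
  unfold MD.C
  have key : ∀ k : Fin (n + 1),
      ((-1 : ℤ)) ^ (n + (k : ℕ) + 1) •
          (conn (σ (fun j : Fin n => Function.update x i (a • u) (k.succAbove j)))
            (Function.update x i (a • u) k))
        = a • (((-1 : ℤ)) ^ (n + (k : ℕ) + 1) •
            (conn (σ (fun j : Fin n => Function.update x i u (k.succAbove j)))
              (Function.update x i u k)))
          + (if k = i then
              ((-1 : ℤ)) ^ (n + (i : ℕ) + 1) • ((σ fun j : Fin n => x (i.succAbove j)) a • u)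
            else 0) := by
    intro k
    by_cases hk : k = i
    · subst hk
      rw [if_pos rfl, MD.update_comp_self, MD.update_comp_self,
        Function.update_self, Function.update_self, hconn, smul_add,
        smul_comm _ a, add_comm]
    · obtain ⟨i', hi'⟩ := MD.update_comp_ne (Ne.symm hk) x
      rw [if_neg hk, add_zero, hi', hi', hσA, map_smul, LinearMap.smul_apply,
        Function.update_of_ne hk, Function.update_of_ne hk, smul_comm]
  rw [Finset.sum_congr rfl (fun k _ => key k), Finset.sum_add_distrib, ← Finset.smul_sum,
    Finset.sum_ite_eq' Finset.univ i, if_pos (Finset.mem_univ i)]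

theorem MD.C_adj (conn : Derivation R A A →ₗ[A] (L →ₗ[R] L))
    (σ : (Fin n → L) → Derivation R A A)
    (hσ0 : ∀ (y : Fin n → L) (p q : Fin n), p ≠ q → y p = y q → σ y = 0)
    (x : Fin (n + 1) → L) (i j : Fin (n + 1)) (hj : (j : ℕ) = (i : ℕ) + 1)
    (hx : x i = x j) : MD.C conn σ x = 0 := by
  have hij : i ≠ j := by intro h; rw [h] at hj; omega
  unfold MD.C
  set t : Fin (n + 1) → L := fun k =>
    ((-1 : ℤ)) ^ (n + (k : ℕ) + 1) • (conn (σ (fun j' : Fin n => x (k.succAbove j'))) (x k))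
    with ht
  have hzero : ∀ k ∈ (Finset.univ : Finset (Fin (n + 1))), k ∉ ({i, j} : Finset (Fin (n + 1))) → t k = 0 := by
    intro k _ hk
    simp only [Finset.mem_insert, Finset.mem_singleton, not_or] at hk
    obtain ⟨p, hp⟩ := Fin.exists_succAbove_eq (Ne.symm hk.1)
    obtain ⟨q, hq⟩ := Fin.exists_succAbove_eq (Ne.symm hk.2)
    have hpq : p ≠ q := by
      intro h; apply hij; rw [← hp, ← hq, h]
    have : σ (fun j' : Fin n => x (k.succAbove j')) = 0 := by
      apply hσ0 _ p q hpq
      simp only [hp, hq, hx]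
    rw [ht]
    simp only [this, map_zero, LinearMap.zero_apply, smul_zero]
  have hsum : ∑ k : Fin (n + 1), t k = ∑ k ∈ ({i, j} : Finset (Fin (n + 1))), t k :=
    (Finset.sum_subset (Finset.subset_univ _) hzero).symm
  rw [hsum, Finset.sum_pair hij]
  -- the two remaining terms cancel
  have hy : (fun j' : Fin n => x (i.succAbove j')) = (fun j' : Fin n => x (j.succAbove j')) := by
    funext j'
    rcases lt_trichotomy ((j' : ℕ)) ((i : ℕ)) with h1 | h1 | h1
    · rw [Fin.succAbove_of_castSucc_lt i j' (by simp [Fin.lt_def]; omega),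
        Fin.succAbove_of_castSucc_lt j j' (by simp [Fin.lt_def]; omega)]
    · rw [Fin.succAbove_of_le_castSucc i j' (by simp [Fin.le_def]; omega),
        Fin.succAbove_of_castSucc_lt j j' (by simp [Fin.lt_def]; omega)]
      have e1 : j'.succ = j := by apply Fin.ext; simp; omega
      have e2 : j'.castSucc = i := by apply Fin.ext; simp; omega
      rw [e1, e2]; exact hx.symm
    · rw [Fin.succAbove_of_le_castSucc i j' (by simp [Fin.le_def]; omega),
        Fin.succAbove_of_le_castSucc j j' (by simp [Fin.le_def]; omega)]
  have hej : n + (j : ℕ) + 1 = (n + (i : ℕ) + 1) + 1 := by omega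
  have hcancel : t j = - t i := by
    rw [ht]
    simp only [← hy, ← hx]
    rw [show ((-1 : ℤ)) ^ (n + (j : ℕ) + 1) = ((-1 : ℤ)) ^ (n + (i : ℕ) + 1) * (-1) from by
      rw [hej, pow_succ], mul_smul, neg_one_zsmul, smul_neg]
  rw [hcancel, add_neg_cancel]

theorem MD.sign_cancel (k l : ℕ) (h : l ≤ k) :
    ((-1 : ℤ)) ^ (k - l) + ((-1 : ℤ)) ^ (k + l + 1) = 0 := by
  have : ((-1 : ℤ)) ^ (k + l) = ((-1 : ℤ)) ^ (k - l) := by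
    rw [show k + l = (k - l) + 2 * l by omega, pow_add, pow_mul]
    norm_num
  rw [pow_succ, this]
  ring

theorem MD.C_alt (conn : Derivation R A A →ₗ[A] (L →ₗ[R] L))
    (σ : (Fin n → L) → Derivation R A A)
    (hσadd : ∀ (y : Fin n → L) (i : Fin n) (u v : L),
      σ (Function.update y i (u + v)) = σ (Function.update y i u) + σ (Function.update y i v))
    (hσ0 : ∀ (y : Fin n → L) (p q : Fin n), p ≠ q → y p = y q → σ y = 0) :
    ∀ (x : Fin (n + 1) → L) (i j : Fin (n + 1)), i ≠ j → x i = x j → MD.C conn σ x = 0 :=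
  MD.alternating (MD.C conn σ) (MD.C_update_add conn σ hσadd)
    (fun x i j hj hx => MD.C_adj conn σ hσ0 x i j hj hx)

end MDmain



/-- if `L` is an `A`-module admitting a Koszul connection
`conn : Der(A) → Hom_R(L,L)`, then for each `n ≥ 0` the map `D ↦ (F_D, σ_D)`, with
`F_D(x₀,…,xₙ) = D(x₀,…,xₙ) + (-1)ⁿ Σᵢ (-1)^{i+1} conn_{σ_D(x₀,…,x̂ᵢ,…,xₙ)}(xᵢ)`, is an
`A`-module isomorphism `Derⁿ(L) ≅ Hom_A(Λ^{n+1}_A L, L) ⊕ Hom_A(Λⁿ_A L, Der(A))`;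
in particular `0 → Hom_A(Λ^{n+1}_A L, L) → Derⁿ(L) → Hom_A(Λⁿ_A L, Der(A)) → 0` is a
short exact sequence of `A`-modules. -/
theorem moduleMultiderivation_splitting
    (R : Type*) [CommRing R] (A : Type*) [CommRing A] [Algebra R A]
    (L : Type*) [AddCommGroup L] [Module R L] [Module A L] [IsScalarTower R A L]
    (n : ℕ)
    (conn : Derivation R A A →ₗ[A] (L →ₗ[R] L))
    (hconn : ∀ (X : Derivation R A A) (a : A) (x : L),
      conn X (a • x) = X a • x + a • conn X x) :
    Set.BijOn
      (fun P : ((Fin (n + 1) → L) → L) × ((Fin n → L) → Derivation R A A) =>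
        ((fun x : Fin (n + 1) → L =>
            P.1 x + ∑ i : Fin (n + 1),
              ((-1 : ℤ)) ^ (n + (i : ℕ) + 1) •
                (conn (P.2 (fun j : Fin n => x (i.succAbove j))) (x i))),
          P.2))
      -- the set of `A`-module multiderivations of degree `n` of `L` (with their symbols) :
      {P : ((Fin (n + 1) → L) → L) × ((Fin n → L) → Derivation R A A) |
        (∀ (x : Fin (n + 1) → L) (i : Fin (n + 1)) (u v : L),
          P.1 (Function.update x i (u + v))
            = P.1 (Function.update x i u) + P.1 (Function.update x i v)) ∧
        (∀ (x : Fin (n + 1) → L) (i : Fin (n + 1)) (r : R) (u : L),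
          P.1 (Function.update x i (r • u)) = r • P.1 (Function.update x i u)) ∧
        (∀ (x : Fin (n + 1) → L) (i j : Fin (n + 1)), i ≠ j → x i = x j → P.1 x = 0) ∧
        (∀ (x : Fin n → L) (i : Fin n) (u v : L),
          P.2 (Function.update x i (u + v))
            = P.2 (Function.update x i u) + P.2 (Function.update x i v)) ∧
        (∀ (x : Fin n → L) (i : Fin n) (a : A) (u : L),
          P.2 (Function.update x i (a • u)) = a • P.2 (Function.update x i u)) ∧
        (∀ (x : Fin n → L) (i j : Fin n), i ≠ j → x i = x j → P.2 x = 0) ∧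
        (∀ (x : Fin (n + 1) → L) (i : Fin (n + 1)) (a : A),
          P.1 (Function.update x i (a • x i))
            = a • P.1 x + ((-1 : ℤ)) ^ (n - (i : ℕ)) •
                ((P.2 (fun j : Fin n => x (i.succAbove j))) a • x i))}
      -- the set of pairs of `A`-multilinear alternating maps
      -- `Λ^{n+1}_A L → L` and `Λⁿ_A L → Der(A)` :
      {Q : ((Fin (n + 1) → L) → L) × ((Fin n → L) → Derivation R A A) |
        (∀ (x : Fin (n + 1) → L) (i : Fin (n + 1)) (u v : L),
          Q.1 (Function.update x i (u + v))
            = Q.1 (Function.update x i u) + Q.1 (Function.update x i v)) ∧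
        (∀ (x : Fin (n + 1) → L) (i : Fin (n + 1)) (a : A) (u : L),
          Q.1 (Function.update x i (a • u)) = a • Q.1 (Function.update x i u)) ∧
        (∀ (x : Fin (n + 1) → L) (i j : Fin (n + 1)), i ≠ j → x i = x j → Q.1 x = 0) ∧
        (∀ (x : Fin n → L) (i : Fin n) (u v : L),
          Q.2 (Function.update x i (u + v))
            = Q.2 (Function.update x i u) + Q.2 (Function.update x i v)) ∧
        (∀ (x : Fin n → L) (i : Fin n) (a : A) (u : L),
          Q.2 (Function.update x i (a • u)) = a • Q.2 (Function.update x i u)) ∧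
        (∀ (x : Fin n → L) (i j : Fin n), i ≠ j → x i = x j → Q.2 x = 0)}
    ∧
    (∀ P P' : ((Fin (n + 1) → L) → L) × ((Fin n → L) → Derivation R A A),
      (fun x : Fin (n + 1) → L =>
          (P.1 + P'.1) x + ∑ i : Fin (n + 1),
            ((-1 : ℤ)) ^ (n + (i : ℕ) + 1) •
              (conn ((P.2 + P'.2) (fun j : Fin n => x (i.succAbove j))) (x i)))
        = (fun x => P.1 x + ∑ i : Fin (n + 1),
            ((-1 : ℤ)) ^ (n + (i : ℕ) + 1) •
              (conn (P.2 (fun j => x (i.succAbove j))) (x i)))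
          + (fun x => P'.1 x + ∑ i : Fin (n + 1),
            ((-1 : ℤ)) ^ (n + (i : ℕ) + 1) •
              (conn (P'.2 (fun j => x (i.succAbove j))) (x i)))) ∧
    (∀ (a : A) (P : ((Fin (n + 1) → L) → L) × ((Fin n → L) → Derivation R A A)),
      (fun x : Fin (n + 1) → L =>
          (a • P.1) x + ∑ i : Fin (n + 1),
            ((-1 : ℤ)) ^ (n + (i : ℕ) + 1) •
              (conn ((a • P.2) (fun j : Fin n => x (i.succAbove j))) (x i)))
        = a • (fun x => P.1 x + ∑ i : Fin (n + 1),
            ((-1 : ℤ)) ^ (n + (i : ℕ) + 1) •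
              (conn (P.2 (fun j => x (i.succAbove j))) (x i)))) := by
  refine ⟨⟨?_, ?_, ?_⟩, ?_, ?_⟩
  · -- MapsTo
    rintro ⟨D, σ⟩ ⟨h1, h2, h3, h4, h5, h6, h7⟩
    dsimp only at h1 h2 h3 h4 h5 h6 h7
    refine ⟨?_, ?_, ?_, h4, h5, h6⟩
    · intro x i u v
      show D (Function.update x i (u + v)) + MD.C conn σ (Function.update x i (u + v))
        = (D (Function.update x i u) + MD.C conn σ (Function.update x i u))
          + (D (Function.update x i v) + MD.C conn σ (Function.update x i v))
      rw [h1, MD.C_update_add conn σ h4]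
      abel
    · intro x i a u
      show D (Function.update x i (a • u)) + MD.C conn σ (Function.update x i (a • u))
        = a • (D (Function.update x i u) + MD.C conn σ (Function.update x i u))
      have h7' := h7 (Function.update x i u) i a
      rw [Function.update_self, Function.update_idem, MD.update_comp_self] at h7'
      rw [h7', MD.C_update_smulA conn hconn σ h5 x i a u, smul_add, add_add_add_comm,
        ← add_smul, MD.sign_cancel n i (Nat.lt_succ_iff.mp i.isLt), zero_smul, add_zero]
    · intro x i j hij hx
      show D x + MD.C conn σ x = 0
      rw [h3 x i j hij hx, MD.C_alt conn σ h4 h6 x i j hij hx, add_zero]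
  · -- InjOn
    rintro ⟨D, σ⟩ - ⟨D', σ'⟩ - h
    simp only [Prod.mk.injEq] at h
    obtain ⟨h1, h2⟩ := h
    subst h2
    refine Prod.ext_iff.mpr ⟨?_, rfl⟩
    funext x
    exact add_right_cancel (congrFun h1 x)
  · -- SurjOn
    rintro ⟨F, σ⟩ ⟨q1, q2, q3, q4, q5, q6⟩
    dsimp only at q1 q2 q3 q4 q5 q6
    refine ⟨(fun x => F x - MD.C conn σ x, σ), ⟨?_, ?_, ?_, q4, q5, q6, ?_⟩, ?_⟩
    · intro x i u v
      show F (Function.update x i (u + v)) - MD.C conn σ (Function.update x i (u + v))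
        = (F (Function.update x i u) - MD.C conn σ (Function.update x i u))
          + (F (Function.update x i v) - MD.C conn σ (Function.update x i v))
      rw [q1, MD.C_update_add conn σ q4]
      abel
    · intro x i r u
      show F (Function.update x i (r • u)) - MD.C conn σ (Function.update x i (r • u))
        = r • (F (Function.update x i u) - MD.C conn σ (Function.update x i u))
      rw [MD.C_update_smulR conn σ q5, ← algebraMap_smul A r u, q2, algebraMap_smul, smul_sub]
    · intro x i j hij hx
      show F x - MD.C conn σ x = 0
      rw [q3 x i j hij hx, MD.C_alt conn σ q4 q6 x i j hij hx, sub_zero]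
    · intro x i a
      show F (Function.update x i (a • x i)) - MD.C conn σ (Function.update x i (a • x i))
        = a • (F x - MD.C conn σ x)
          + ((-1 : ℤ)) ^ (n - (i : ℕ)) • ((σ fun j : Fin n => x (i.succAbove j)) a • x i)
      have hq2 := q2 x i a (x i)
      rw [Function.update_eq_self] at hq2
      have hC := MD.C_update_smulA conn hconn σ q5 x i a (x i)
      rw [Function.update_eq_self] at hC
      have hs : ((-1 : ℤ)) ^ (n - (i : ℕ)) = -((-1 : ℤ)) ^ (n + (i : ℕ) + 1) := by
        have := MD.sign_cancel n i (Nat.lt_succ_iff.mp i.isLt); linarith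
      rw [hq2, hC, smul_sub, hs, neg_smul]
      abel
    · show ((fun x => (F x - MD.C conn σ x) + MD.C conn σ x), σ) = (F, σ)
      refine Prod.ext_iff.mpr ⟨funext fun x => ?_, rfl⟩
      simp
  · -- additivity
    intro P P'
    funext x
    simp only [Pi.add_apply, map_add, LinearMap.add_apply, smul_add, Finset.sum_add_distrib]
    abel
  · -- A-linearity
    intro a P
    funext x
    simp only [Pi.smul_apply, map_smul, LinearMap.smul_apply, smul_add, Finset.smul_sum]
    congr 1
    exact Finset.sum_congr rfl fun k _ => smul_comm _ _ _
end
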